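/- Indistinguishability of t copies of the entanglement-based public key from the maximally mixed state: for n ≥ 1 and t ≥ 1, D( (1/2^{n−1}) Σ_{k ∈ Ω_n} (ρ_k^0)^{⊗t} , ((1/2^n)·1)^{⊗t} ) < √(2^t / 2^{n+1}) (equivalently, the trace distance is less than √(1/2^{n−t+1})). -/

import Mathlib

open Matrix Finset ComplexOrder

/-- Hamming weight of a bit string. -/
def hammingW {n : ℕ} (ν : Fin n → ZMod 2) : ℕ :=
  (Finset.univ.filter fun l => ν l = 1).card

/-- `Ω_n`: the bit strings of length `n` with odd Hamming weight. -/
def Omega (n : ℕ) : Finset (Fin n → ZMod 2) :=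
  Finset.univ.filter fun k => Odd (hammingW k)

/-- The public-key state `ρ_k^0`. -/
noncomputable def rho0 (n : ℕ) (k : Fin n → ZMod 2) :
    Matrix (Fin n → ZMod 2) (Fin n → ZMod 2) ℂ :=
  (1 / 2 ^ n : ℂ) •
    ∑ i : Fin n → ZMod 2, ∑ x : ZMod 2, Matrix.single i (i + x • k) (1 : ℂ)

/-- Tensor product of a `t`-indexed family of matrices over index type `m`. -/
def tensT {t : ℕ} {m : Type*} [Fintype m] (ρ : Fin t → Matrix m m ℂ) :
    Matrix (Fin t → m) (Fin t → m) ℂ :=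
  Matrix.of fun u v => ∏ s, ρ s (u s) (v s)

/-- `|A|` is the positive semidefinite square root of `AᴴA`. -/
noncomputable def matAbs {m : Type*} [Fintype m] [DecidableEq m] (A : Matrix m m ℂ) :
    Matrix m m ℂ :=
  (Matrix.posSemidef_conjTranspose_mul_self A).1.eigenvectorUnitary.1 *
    Matrix.diagonal ((↑) ∘ (√·) ∘ (Matrix.posSemidef_conjTranspose_mul_self A).1.eigenvalues) *
    (star (Matrix.posSemidef_conjTranspose_mul_self A).1.eigenvectorUnitary : Matrix m m ℂ)

/-- The trace norm `‖A‖_tr = tr |A|` (a real number). -/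
noncomputable def traceNorm {m : Type*} [Fintype m] [DecidableEq m] (A : Matrix m m ℂ) : ℝ :=
  (matAbs A).trace.re

/-! The trace norm is dominated by the Hilbert–Schmidt norm, `‖A‖_tr² ≤ d · tr (Aᴴ A)`
(Cauchy–Schwarz on the singular values), so for a state `ρ` of dimension `d` we get
`‖ρ - 1/d‖_tr² ≤ d · tr ρ² - 1`, and it suffices to compute the purity of the averaged key.
Since `ρ_k = 2⁻ⁿ (1 + X_k)` with `X_k` the translation by `k`, for nonzero `k, k'` we have
`tr (ρ_k ρ_k') = 2⁻ⁿ (1 + [k = k'])`; the tensor power raises this to the `t`-th power, and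
averaging over the `2ⁿ⁻¹` odd-weight keys gives `d · tr ρ̄² - 1 = (2ᵗ - 1) / 2ⁿ⁻¹`. -/

section TraceNorm

variable {m : Type*} [Fintype m]

lemma card_ne_zero_of_trace_eq_one {ρ : Matrix m m ℂ} (htr : ρ.trace = 1) : Fintype.card m ≠ 0 := by
  rintro hd
  simp_all [Fintype.card_eq_zero_iff, trace]

variable [DecidableEq m]

lemma traceNorm_eq_sum_sqrt_eigenvalues (A : Matrix m m ℂ) :
    traceNorm A = ∑ i, √((posSemidef_conjTranspose_mul_self A).1.eigenvalues i) := by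
  set hA := (posSemidef_conjTranspose_mul_self A).1
  have hU : (star hA.eigenvectorUnitary : Matrix m m ℂ) * hA.eigenvectorUnitary = 1 :=
    Unitary.coe_star_mul_self _
  rw [traceNorm, matAbs, trace_mul_cycle, hU, Matrix.one_mul, trace_diagonal]
  simp [Complex.re_sum]

lemma traceNorm_nonneg (A : Matrix m m ℂ) : 0 ≤ traceNorm A := by
  rw [traceNorm_eq_sum_sqrt_eigenvalues]
  positivity

lemma traceNorm_sq_le_card_mul_trace (A : Matrix m m ℂ) :
    traceNorm A ^ 2 ≤ Fintype.card m * (Aᴴ * A).trace.re := by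
  set hA := (posSemidef_conjTranspose_mul_self A).1
  rw [traceNorm_eq_sum_sqrt_eigenvalues, hA.trace_eq_sum_eigenvalues]
  calc (∑ i, √(hA.eigenvalues i)) ^ 2 ≤ Fintype.card m * ∑ i, √(hA.eigenvalues i) ^ 2 :=
        sq_sum_le_card_mul_sum_sq
    _ = Fintype.card m * (∑ i, (hA.eigenvalues i : ℂ)).re := by
        simp [Complex.re_sum,
          Real.sq_sqrt ((posSemidef_conjTranspose_mul_self A).eigenvalues_nonneg _)]

lemma trace_sub_smul_one_mul_self {ρ : Matrix m m ℂ} (hρ : ρ.IsHermitian) (htr : ρ.trace = 1) :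
    ((ρ - (Fintype.card m : ℂ)⁻¹ • 1)ᴴ * (ρ - (Fintype.card m : ℂ)⁻¹ • 1)).trace
      = (ρ * ρ).trace - (Fintype.card m : ℂ)⁻¹ := by
  have hd : (Fintype.card m : ℂ) ≠ 0 := Nat.cast_ne_zero.mpr (card_ne_zero_of_trace_eq_one htr)
  rw [conjTranspose_sub, conjTranspose_smul, conjTranspose_one, hρ.eq]
  simp only [star_inv₀, star_natCast, Matrix.sub_mul, Matrix.mul_sub, Matrix.smul_mul,
    Matrix.mul_smul, Matrix.one_mul, Matrix.mul_one, trace_sub, trace_smul, trace_one, htr,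
    smul_eq_mul]
  field_simp
  ring

lemma traceNorm_sub_smul_one_sq_le {ρ : Matrix m m ℂ} (hρ : ρ.IsHermitian) (htr : ρ.trace = 1) :
    traceNorm (ρ - (Fintype.card m : ℂ)⁻¹ • 1) ^ 2
      ≤ Fintype.card m * (ρ * ρ).trace.re - 1 := by
  have hd : (Fintype.card m : ℝ) ≠ 0 := Nat.cast_ne_zero.mpr (card_ne_zero_of_trace_eq_one htr)
  set σ := ρ - (Fintype.card m : ℂ)⁻¹ • 1 with hσ
  calc traceNorm σ ^ 2 ≤ Fintype.card m * (σᴴ * σ).trace.re := traceNorm_sq_le_card_mul_trace σ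
    _ = Fintype.card m * ((ρ * ρ).trace.re - (Fintype.card m : ℝ)⁻¹) := by
        rw [hσ, trace_sub_smul_one_mul_self hρ htr, Complex.sub_re, ← Complex.ofReal_natCast,
          ← Complex.ofReal_inv, Complex.ofReal_re]
    _ = Fintype.card m * (ρ * ρ).trace.re - 1 := by
        rw [mul_sub, mul_inv_cancel₀ hd]

end TraceNorm

section Tensor

variable {t : ℕ} {m : Type*} [Fintype m]

lemma tensT_mul_tensT (A B : Fin t → Matrix m m ℂ) :
    tensT A * tensT B = tensT fun s => A s * B s := by
  ext u v
  simp only [tensT, mul_apply, of_apply, Fintype.prod_sum, ← prod_mul_distrib]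

lemma trace_tensT (A : Fin t → Matrix m m ℂ) : (tensT A).trace = ∏ s, (A s).trace := by
  simp only [trace, diag_apply, tensT, of_apply, Fintype.prod_sum]

lemma conjTranspose_tensT (A : Fin t → Matrix m m ℂ) :
    (tensT A)ᴴ = tensT fun s => (A s)ᴴ := by
  ext u v
  simp [tensT, conjTranspose_apply]

lemma tensT_const_smul_one [DecidableEq m] (c : ℂ) :
    tensT (fun _ : Fin t => c • (1 : Matrix m m ℂ)) = c ^ t • 1 := by
  ext u v
  simp only [tensT, of_apply, Matrix.smul_apply, one_apply, smul_eq_mul, prod_mul_distrib,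
    prod_const, card_univ, Fintype.card_fin, prod_boole, mem_univ, true_imp_iff, funext_iff]

end Tensor

lemma ZMod.sum_univ_two {M : Type*} [AddCommMonoid M] (f : ZMod 2 → M) :
    ∑ x, f x = f 0 + f 1 :=
  Fin.sum_univ_two f

lemma sum_sum_ite_eq {α R : Type*} [DecidableEq α] [CommRing R] (s : Finset α) (x y : R) :
    ∑ a ∈ s, ∑ b ∈ s, (if a = b then x else y) = #s * x + (#s * #s - #s) * y := by
  have hsplit : ∀ a b : α, (if a = b then x else y) = y + if a = b then x - y else 0 := by
    intro a b
    split_ifs <;> ring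
  have hrow : ∀ a ∈ s, ∑ b ∈ s, (if a = b then x else y) = #s * y + (x - y) := by
    intro a ha
    simp only [hsplit a, sum_add_distrib, sum_const, nsmul_eq_mul, sum_ite_eq, if_pos ha]
  rw [sum_congr rfl hrow, sum_const, nsmul_eq_mul]
  ring

section PublicKey

variable {n : ℕ}

lemma rho0_apply (k a b : Fin n → ZMod 2) :
    rho0 n k a b = (1 / 2 ^ n) * ∑ x : ZMod 2, if b = a + x • k then 1 else 0 := by
  simp only [rho0, Matrix.smul_apply, Matrix.sum_apply, single_apply, smul_eq_mul]
  rw [sum_comm]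
  simp only [ite_and]
  simp [eq_comm]

lemma card_bitString (n : ℕ) : (Fintype.card (Fin n → ZMod 2) : ℂ) = 2 ^ n := by
  simp

lemma trace_rho0 {k : Fin n → ZMod 2} (hk : k ≠ 0) : (rho0 n k).trace = 1 := by
  simp only [trace, diag_apply, rho0_apply, left_eq_add, smul_eq_zero, hk, or_false,
    sum_ite_eq', mem_univ, if_true, sum_const, card_univ, nsmul_eq_mul, card_bitString]
  field_simp

lemma bitString_add_eq_zero_iff {k k' : Fin n → ZMod 2} : k + k' = 0 ↔ k = k' := by
  rw [add_eq_zero_iff_eq_neg, show -k' = k' from funext fun i => ZMod.neg_eq_self_mod_two _]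

lemma bitString_eq_add_comm {a b c : Fin n → ZMod 2} : a = b + c ↔ b = a + c := by
  have hc : c + c = 0 := bitString_add_eq_zero_iff.mpr rfl
  constructor <;> rintro rfl <;> rw [add_assoc, hc, add_zero]

lemma rho0_isHermitian (k : Fin n → ZMod 2) : (rho0 n k).IsHermitian := by
  ext a b
  simp [rho0_apply, bitString_eq_add_comm]

lemma trace_rho0_mul_rho0 {k k' : Fin n → ZMod 2} (hk : k ≠ 0) (hk' : k' ≠ 0) :
    (rho0 n k * rho0 n k').trace = (1 + if k = k' then 1 else 0) / 2 ^ n := by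
  have hrow : ∀ a, ∑ b, rho0 n k a b * rho0 n k' b a
      = (1 / 2 ^ n) ^ 2 * (1 + if k = k' then 1 else 0) := by
    intro a
    calc ∑ b, rho0 n k a b * rho0 n k' b a
        = (1 / 2 ^ n) ^ 2 * ∑ x : ZMod 2, ∑ y : ZMod 2, ∑ b,
            (if b = a + x • k then 1 else 0) * (if a = b + y • k' then 1 else 0) := by
          simp only [rho0_apply, mul_mul_mul_comm, ← mul_sum, sum_mul_sum, sq]
          congr 1
          rw [sum_comm]
          refine sum_congr rfl fun x _ => ?_
          simp only [mul_sum]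
          exact sum_comm
      _ = (1 / 2 ^ n) ^ 2 * ∑ x : ZMod 2, ∑ y : ZMod 2, if x • k + y • k' = 0 then 1 else 0 := by
          simp only [boole_mul, sum_ite_eq', mem_univ, if_true, add_assoc, left_eq_add]
      _ = _ := by
          simp only [ZMod.sum_univ_two]
          simp [hk, hk', bitString_add_eq_zero_iff]
  simp only [trace, diag_apply, mul_apply, hrow, sum_const, card_univ, nsmul_eq_mul,
    card_bitString]
  field_simp

lemma ne_zero_of_mem_Omega {k : Fin n → ZMod 2} (hk : k ∈ Omega n) : k ≠ 0 := by
  rintro rfl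
  rw [Omega, mem_filter] at hk
  simp [hammingW] at hk

lemma sum_neg_one_pow_hammingW (hn : 1 ≤ n) : ∑ k : Fin n → ZMod 2, (-1 : ℤ) ^ hammingW k = 0 := by
  have hsign : ∀ k : Fin n → ZMod 2,
      (-1 : ℤ) ^ hammingW k = ∏ l, if k l = 1 then -1 else 1 := by
    intro k
    rw [prod_ite, prod_const, prod_const_one, mul_one, hammingW]
  simp only [hsign]
  rw [← Fintype.prod_sum (fun (_ : Fin n) (x : ZMod 2) => if x = 1 then (-1 : ℤ) else 1)]
  simp [ZMod.sum_univ_two, zero_pow (Nat.one_le_iff_ne_zero.mp hn)]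

lemma card_Omega (hn : 1 ≤ n) : #(Omega n) = 2 ^ (n - 1) := by
  have hsign := sum_filter_add_sum_filter_not univ (fun k : Fin n → ZMod 2 => Odd (hammingW k))
    fun k => (-1 : ℤ) ^ hammingW k
  rw [sum_neg_one_pow_hammingW hn,
    sum_congr rfl fun k hk => Odd.neg_one_pow (mem_filter.mp hk).2,
    sum_congr rfl fun k hk => Even.neg_one_pow (Nat.not_odd_iff_even.mp (mem_filter.mp hk).2)]
    at hsign
  have hcard := card_filter_add_card_filter_not (s := univ)
    fun k : Fin n → ZMod 2 => Odd (hammingW k)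
  have hpow : 2 ^ n = 2 * 2 ^ (n - 1) := by rw [← pow_succ']; congr 1; omega
  simp only [sum_const, nsmul_eq_mul, mul_neg, mul_one, card_univ, Fintype.card_fun,
    ZMod.card, Fintype.card_fin] at hsign hcard
  rw [Omega]
  omega

end PublicKey

noncomputable def keyMixture (n t : ℕ) :
    Matrix (Fin t → Fin n → ZMod 2) (Fin t → Fin n → ZMod 2) ℂ :=
  (1 / 2 ^ (n - 1) : ℂ) • ∑ k ∈ Omega n, tensT fun _ : Fin t => rho0 n k

section KeyMixture

variable {n t : ℕ}

lemma keyMixture_isHermitian : (keyMixture n t).IsHermitian := by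
  simp [IsHermitian, keyMixture, conjTranspose_sum, conjTranspose_tensT, (rho0_isHermitian _).eq]

lemma trace_keyMixture (hn : 1 ≤ n) : (keyMixture n t).trace = 1 := by
  rw [keyMixture, trace_smul, trace_sum]
  have htr : ∀ k ∈ Omega n, (tensT fun _ : Fin t => rho0 n k).trace = 1 := fun k hk => by
    simp [trace_tensT, trace_rho0 (ne_zero_of_mem_Omega hk)]
  rw [sum_congr rfl htr, sum_const, card_Omega hn, nsmul_eq_mul, smul_eq_mul]
  push_cast
  field_simp

lemma trace_keyMixture_mul_self (hn : 1 ≤ n) :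
    (keyMixture n t * keyMixture n t).trace
      = ((1 + (2 ^ t - 1) / 2 ^ (n - 1)) / (2 ^ n) ^ t : ℝ) := by
  have hpair : ∀ k ∈ Omega n, ∀ k' ∈ Omega n,
      ((tensT fun _ : Fin t => rho0 n k) * tensT fun _ : Fin t => rho0 n k').trace
        = if k = k' then (2 / 2 ^ n) ^ t else (1 / 2 ^ n) ^ t := fun k hk k' hk' => by
    rw [tensT_mul_tensT, trace_tensT, prod_const, card_univ, Fintype.card_fin,
      trace_rho0_mul_rho0 (ne_zero_of_mem_Omega hk) (ne_zero_of_mem_Omega hk')]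
    split_ifs <;> norm_num
  simp only [keyMixture, Matrix.smul_mul, Matrix.mul_smul, sum_mul_sum, trace_smul, trace_sum,
    smul_eq_mul]
  rw [sum_congr rfl fun k hk => sum_congr rfl fun k' hk' => hpair k hk k' hk', sum_sum_ite_eq,
    card_Omega hn, div_pow, div_pow, one_pow]
  push_cast
  field_simp
  ring

lemma traceNorm_keyMixture_sub_sq_le (hn : 1 ≤ n) :
    traceNorm (keyMixture n t - (1 / 2 ^ n : ℂ) ^ t • 1) ^ 2 ≤ (2 ^ t - 1) / 2 ^ (n - 1) := by
  have hcard : (Fintype.card (Fin t → Fin n → ZMod 2) : ℂ)⁻¹ = (1 / 2 ^ n) ^ t := by simp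
  have hcardR : (Fintype.card (Fin t → Fin n → ZMod 2) : ℝ) = (2 ^ n) ^ t := by simp
  have h := traceNorm_sub_smul_one_sq_le keyMixture_isHermitian (trace_keyMixture (t := t) hn)
  rw [hcard, trace_keyMixture_mul_self hn, Complex.ofReal_re, hcardR] at h
  refine h.trans_eq ?_
  field_simp
  ring

end KeyMixture

theorem public_key_copies_indistinguishable_general (n t : ℕ) (hn : 1 ≤ n) :
    (1 / 2) * traceNorm
        (((1 / 2 ^ (n - 1) : ℂ) • ∑ k ∈ Omega n, tensT (fun _ : Fin t => rho0 n k))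
          - tensT (fun _ : Fin t =>
              (1 / 2 ^ n : ℂ) • (1 : Matrix (Fin n → ZMod 2) (Fin n → ZMod 2) ℂ)))
      < Real.sqrt (2 ^ t / 2 ^ (n + 1)) := by
  rw [tensT_const_smul_one, ← keyMixture]
  have hbound := traceNorm_keyMixture_sub_sq_le (t := t) hn
  have hpow : (2 : ℝ) ^ (n + 1) = 2 ^ (n - 1) * 4 := by
    rw [show n + 1 = n - 1 + 2 by omega, pow_add]
    norm_num
  rw [Real.lt_sqrt (mul_nonneg (by norm_num) (traceNorm_nonneg _))]
  calc (1 / 2 * traceNorm (keyMixture n t - (1 / 2 ^ n : ℂ) ^ t • 1)) ^ 2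
      = traceNorm (keyMixture n t - (1 / 2 ^ n : ℂ) ^ t • 1) ^ 2 / 4 := by ring
    _ ≤ (2 ^ t - 1) / 2 ^ (n - 1) / 4 := by gcongr
    _ = (2 ^ t - 1) / 2 ^ (n + 1) := by rw [hpow, div_div]
    _ < 2 ^ t / 2 ^ (n + 1) := by gcongr; linarith

/-- `t` copies of the entanglement-based public key are indistinguishable from the
maximally mixed state. -/
theorem public_key_copies_indistinguishable (n t : ℕ) (hn : 1 ≤ n) (ht : 1 ≤ t) :
    (1 / 2) * traceNorm
        (((1 / 2 ^ (n - 1) : ℂ) • ∑ k ∈ Omega n, tensT (fun _ : Fin t => rho0 n k))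
          - tensT (fun _ : Fin t =>
              (1 / 2 ^ n : ℂ) • (1 : Matrix (Fin n → ZMod 2) (Fin n → ZMod 2) ℂ)))
      < Real.sqrt (2 ^ t / 2 ^ (n + 1)) :=
  public_key_copies_indistinguishable_general n t hn
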